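/- arXiv:1112.6142 — 2 statements merged into one kernel-verified Lean document; each statement's English description precedes it below -/
import Mathlib

section
/- For every fixed integer N ≥ 6, the limit as K → ∞ of the supremum over all real α of min_{K ≤ k ≤ K+N−1} ‖φ^k α‖ exists and equals 1/5. -/
/-- Distance from a real number to the nearest integer. -/
noncomputable def distNearestInt (x : ℝ) : ℝ := |x - round x|

/-- The golden ratio. -/
noncomputable def φ : ℝ := (1 + Real.sqrt 5) / 2

/-!
Upper bound: `x j = φ ^ (K + j) * α` satisfies `x (j + 2) = x j + x (j + 1)`, so modulo integers
`x 2, …, x 5` are `u + v, u + 2v, 2u + 3v, 3u + 5v` where `u, v` are the signed distances of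
`x 0, x 1` to their nearest integers. A short case analysis shows that these six numbers cannot
all lie at distance more than `1/5` from `ℤ`.

Lower bound: for `α = φ ^ M / 5` we get `φ ^ k * α = (L (k + M) - ψ ^ (k + M)) / 5`, where the
Lucas number `L n = φ ^ n + ψ ^ n` is never divisible by `5` (as `L (n + 1) ≡ 3 L n [ZMOD 5]`),
so `L (k + M) / 5` is at distance at least `1/5` from `ℤ` while `ψ ^ (k + M)` is tiny.
-/

lemma distNearestInt_le_abs_sub_intCast (x : ℝ) (m : ℤ) : distNearestInt x ≤ |x - m| :=
  round_le x m

lemma distNearestInt_neg_le (x : ℝ) : distNearestInt (-x) ≤ distNearestInt x := by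
  refine (distNearestInt_le_abs_sub_intCast (-x) (-round x)).trans_eq ?_
  rw [distNearestInt, ← abs_neg]
  push_cast
  ring_nf

lemma distNearestInt_neg (x : ℝ) : distNearestInt (-x) = distNearestInt x :=
  (distNearestInt_neg_le x).antisymm (by simpa using distNearestInt_neg_le (-x))

lemma distNearestInt_le_add_abs_sub (x y : ℝ) : distNearestInt x ≤ distNearestInt y + |x - y| :=
  calc distNearestInt x ≤ |x - round y| := distNearestInt_le_abs_sub_intCast x _
    _ ≤ |x - y| + |y - round y| := abs_sub_le _ _ _
    _ = distNearestInt y + |x - y| := add_comm _ _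

lemma lt_sub_or_add_lt_of_lt_distNearestInt {c x : ℝ} (h : c < distNearestInt x) (m : ℤ) :
    x < m - c ∨ m + c < x := by
  rcases lt_abs.mp (h.trans_le (distNearestInt_le_abs_sub_intCast x m)) with h | h
  · exact Or.inr (by linarith)
  · exact Or.inl (by linarith)

lemma inv_five_le_distNearestInt_intCast_div_five {a : ℤ} (ha : ¬ 5 ∣ a) :
    1 / 5 ≤ distNearestInt (a / 5) := by
  set n := a - 5 * round ((a : ℝ) / 5) with hn
  have hne : n ≠ 0 := fun h => ha ⟨_, sub_eq_zero.mp h⟩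
  have h1 : (1 : ℝ) ≤ |(n : ℝ)| := by exact_mod_cast Int.one_le_abs hne
  have h2 : (a : ℝ) / 5 - round ((a : ℝ) / 5) = n / 5 := by rw [hn]; push_cast; ring
  rw [distNearestInt, h2, abs_div, abs_of_pos (by norm_num : (0 : ℝ) < 5)]
  linarith

lemma exists_lt_six_distNearestInt_le_of_nonneg (x : ℕ → ℝ)
    (hx : ∀ n, x (n + 2) = x n + x (n + 1)) (a b : ℤ) (h0 : 0 ≤ x 0 - a)
    (h0' : x 0 - a ≤ 1 / 2) (h1 : |x 1 - b| ≤ 1 / 2) :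
    ∃ j < 6, distNearestInt (x j) ≤ 1 / 5 := by
  by_contra! h
  have far (j : ℕ) (hj : j < 6) (m : ℤ) : x j < m - 1 / 5 ∨ m + 1 / 5 < x j :=
    lt_sub_or_add_lt_of_lt_distNearestInt (h j hj) m
  have h2 := hx 0; have h3 := hx 1; have h4 := hx 2; have h5 := hx 3
  rw [abs_le] at h1
  have hu : a + 1 / 5 < x 0 := (far 0 (by norm_num) a).resolve_left (by linarith)
  -- each `m` below is the integer nearest to `x j` under the case assumptions made so far
  rcases far 1 (by norm_num) b with hv | hv
  · rcases far 2 (by norm_num) (a + b) with e2 | e2 <;> push_cast at e2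
    · rcases far 3 (by norm_num) (a + 2 * b - 1) with e3 | e3 <;> push_cast at e3
      · linarith
      rcases far 4 (by norm_num) (2 * a + 3 * b - 1) with e4 | e4 <;> push_cast at e4 <;>
        linarith
    rcases far 3 (by norm_num) (a + 2 * b) with e3 | e3 <;> push_cast at e3 <;> linarith
  · have e2 := (far 2 (by norm_num) (a + b + 1)).resolve_right (by push_cast; linarith)
    push_cast at e2
    rcases far 3 (by norm_num) (a + 2 * b + 1) with e3 | e3 <;> push_cast at e3
    · have e4 := (far 4 (by norm_num) (2 * a + 3 * b + 1)).resolve_left (by push_cast; linarith)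
      push_cast at e4
      rcases far 5 (by norm_num) (3 * a + 5 * b + 2) with e5 | e5 <;> push_cast at e5 <;>
        linarith
    · have e4 := (far 4 (by norm_num) (2 * a + 3 * b + 2)).resolve_right (by push_cast; linarith)
      push_cast at e4
      rcases far 5 (by norm_num) (3 * a + 5 * b + 3) with e5 | e5 <;> push_cast at e5 <;>
        linarith

lemma exists_lt_six_distNearestInt_le (x : ℕ → ℝ) (hx : ∀ n, x (n + 2) = x n + x (n + 1)) :
    ∃ j < 6, distNearestInt (x j) ≤ 1 / 5 := by
  rcases le_or_gt 0 (x 0 - round (x 0)) with h0 | h0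
  · exact exists_lt_six_distNearestInt_le_of_nonneg x hx _ _ h0 (abs_le.mp (abs_sub_round _)).2
      (abs_sub_round _)
  · obtain ⟨j, hj, hxj⟩ := exists_lt_six_distNearestInt_le_of_nonneg (fun n => -x n)
      (fun n => by rw [hx]; ring) (-round (x 0)) (-round (x 1)) (by push_cast; linarith)
      (by push_cast; linarith [(abs_le.mp (abs_sub_round (x 0))).1])
      (by rw [Int.cast_neg, neg_sub_neg, abs_sub_comm]; exact abs_sub_round _)
    exact ⟨j, hj, by simpa only [distNearestInt_neg] using hxj⟩

def lucas : ℕ → ℤ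
  | 0 => 2
  | 1 => 1
  | n + 2 => lucas n + lucas (n + 1)

lemma five_dvd_lucas_succ_sub_three_mul (n : ℕ) : 5 ∣ lucas (n + 1) - 3 * lucas n := by
  induction n with
  | zero => decide
  | succ n ih =>
    have h : lucas (n + 1 + 1) = lucas n + lucas (n + 1) := rfl
    omega

lemma not_five_dvd_lucas (n : ℕ) : ¬ 5 ∣ lucas n := by
  induction n with
  | zero => decide
  | succ n ih =>
    have := five_dvd_lucas_succ_sub_three_mul n
    omega

open Real

lemma φ_eq_goldenRatio : φ = goldenRatio := rfl

lemma lucas_eq_goldenRatio_pow_add_goldenConj_pow (n : ℕ) :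
    (lucas n : ℝ) = goldenRatio ^ n + goldenConj ^ n := by
  induction n using Nat.twoStepInduction with
  | zero => norm_num [lucas]
  | one => simp [lucas, goldenRatio_add_goldenConj]
  | more n ih₀ ih₁ =>
    rw [lucas, Int.cast_add, ih₀, ih₁]
    linear_combination (-goldenRatio ^ n) * goldenRatio_sq - goldenConj ^ n * goldenConj_sq

lemma abs_goldenConj_lt_one : |goldenConj| < 1 :=
  abs_lt.mpr ⟨neg_one_lt_goldenConj, goldenConj_neg.trans one_pos⟩

lemma inf'_distNearestInt_goldenRatio_pow_mul_le {K N : ℕ} (hN : 6 ≤ N)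
    (h : (Finset.Icc K (K + N - 1)).Nonempty) (α : ℝ) :
    (Finset.Icc K (K + N - 1)).inf' h (fun k => distNearestInt (φ ^ k * α)) ≤ 1 / 5 := by
  obtain ⟨j, hj, hle⟩ := exists_lt_six_distNearestInt_le (fun j => φ ^ (K + j) * α) fun n => by
    rw [φ_eq_goldenRatio, ← add_assoc, ← add_assoc, ← goldenRatio_pow_sub_goldenRatio_pow (K + n)]
    ring
  exact (Finset.inf'_le _ (Finset.mem_Icc.mpr ⟨by omega, by omega⟩)).trans hle

lemma exists_forall_lt_distNearestInt_goldenRatio_pow_mul {w : ℝ} (hw : w < 1 / 5) :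
    ∃ α, ∀ k, w < distNearestInt (φ ^ k * α) := by
  obtain ⟨M, hM⟩ := exists_pow_lt_of_lt_one (by linarith : 0 < 1 - 5 * w) abs_goldenConj_lt_one
  refine ⟨φ ^ M / 5, fun k => ?_⟩
  have hsplit : (lucas (k + M) : ℝ) / 5 - φ ^ k * (φ ^ M / 5) = goldenConj ^ (k + M) / 5 := by
    rw [lucas_eq_goldenRatio_pow_add_goldenConj_pow, φ_eq_goldenRatio, pow_add]
    ring
  have hsmall : |goldenConj| ^ (k + M) ≤ |goldenConj| ^ M :=
    pow_le_pow_of_le_one (abs_nonneg _) abs_goldenConj_lt_one.le (by omega)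
  have := (inv_five_le_distNearestInt_intCast_div_five (not_five_dvd_lucas (k + M))).trans
    (distNearestInt_le_add_abs_sub _ (φ ^ k * (φ ^ M / 5)))
  rw [hsplit, abs_div, abs_pow, abs_of_pos (by norm_num : (0 : ℝ) < 5)] at this
  linarith

lemma sSup_inf'_distNearestInt_goldenRatio_pow_mul {K N : ℕ} (hN : 6 ≤ N)
    (h : (Finset.Icc K (K + N - 1)).Nonempty) :
    sSup {y : ℝ | ∃ α : ℝ, y = (Finset.Icc K (K + N - 1)).inf' h
      (fun k => distNearestInt (φ ^ k * α))} = 1 / 5 := by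
  refine csSup_eq_of_forall_le_of_forall_lt_exists_gt ⟨_, 0, rfl⟩ ?_ fun w hw => ?_
  · rintro _ ⟨α, rfl⟩
    exact inf'_distNearestInt_goldenRatio_pow_mul_le hN h α
  · obtain ⟨α, hα⟩ := exists_forall_lt_distNearestInt_goldenRatio_pow_mul hw
    exact ⟨_, ⟨α, rfl⟩, (Finset.lt_inf'_iff h).mpr fun k _ => hα k⟩

theorem golden_d_N_K_tendsto (N : ℕ) (hN : 6 ≤ N) :
    Filter.Tendsto
      (fun K : ℕ => sSup {y : ℝ | ∃ α : ℝ,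
        y = (Finset.Icc K (K + N - 1)).inf' (Finset.nonempty_Icc.mpr (by omega))
              (fun k => distNearestInt (φ ^ k * α))})
      Filter.atTop (nhds (1 / 5)) :=
  tendsto_const_nhds.congr fun K => (sSup_inf'_distNearestInt_goldenRatio_pow_mul hN _).symm
end

section
/- For every integer t ≥ 1 the following exact identities hold: T_{4t} − F_{4t}/(φ+2) = 1/5 + (1−φ)^{4t−1}/(√5·(φ+2)); T_{4t+1} − F_{4t+1}/(φ+2) = −2/5 + (2−φ)(1−φ)^{4t−2}/(√5·(φ+2)); T_{4t+2} − F_{4t+2}/(φ+2) = −1/5 + (3−2φ)(1−φ)^{4t−2}/(√5·(φ+2)); and T_{4t+3} − F_{4t+3}/(φ+2) = 2/5 + (5−3φ)(1−φ)^{4t−2}/(√5·(φ+2)). -/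
/-- `T n = Σ_{k=1}^{⌊n/2⌋} (−1)^{k+1} F_{n−2k}`. -/
def T (n : ℕ) : ℤ := ∑ k ∈ Finset.Icc 1 (n / 2), (-1 : ℤ) ^ (k + 1) * (Nat.fib (n - 2 * k) : ℤ)

lemma T_eq_sum_range (n : ℕ) :
    T n = ∑ i ∈ Finset.range (n / 2), (-1 : ℤ) ^ i * (Nat.fib (n - 2 - 2 * i) : ℤ) := by
  rw [T, ← Finset.Ico_add_one_right_eq_Icc, Finset.sum_Ico_eq_sum_range]
  refine Finset.sum_congr (by simp) fun i _ => ?_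
  rw [show n - 2 * (1 + i) = n - 2 - 2 * i by omega, add_comm 1 i, pow_add, pow_add]
  ring

lemma T_add_two (n : ℕ) : T (n + 2) = Nat.fib n - T n := by
  rw [T_eq_sum_range, T_eq_sum_range, Nat.add_div_right n two_pos, Finset.sum_range_succ',
    sub_eq_add_neg, ← Finset.sum_neg_distrib, add_comm]
  congr 1
  · simp
  · refine Finset.sum_congr rfl fun i _ => ?_
    rw [show n + 2 - 2 - 2 * (i + 1) = n - 2 - 2 * i by omega, pow_succ]
    ring

def tDefect (n : ℕ) : ℤ := 5 * T n - 3 * Nat.fib n + Nat.fib (n + 1)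

lemma tDefect_add_two (n : ℕ) : tDefect (n + 2) = -tDefect n := by
  simp only [tDefect, T_add_two, Nat.fib_add_two, Nat.cast_add]
  ring

lemma tDefect_periodic : Function.Periodic tDefect 4 := fun n => by
  rw [show n + 4 = n + 2 + 2 by rfl, tDefect_add_two, tDefect_add_two, neg_neg]

lemma tDefect_initial_values : tDefect 0 = 1 ∧ tDefect 1 = -2 ∧ tDefect 2 = -1 ∧ tDefect 3 = 2 := by
  decide

lemma phi_eq_goldenRatio : φ = Real.goldenRatio := rfl

lemma phi_sq : φ ^ 2 = φ + 1 := Real.goldenRatio_sq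

lemma one_sub_phi_pow (k : ℕ) : (1 - φ) ^ k = Nat.fib (k + 1) - φ * Nat.fib k := by
  rw [phi_eq_goldenRatio, Real.one_sub_goldenConj, Real.fib_succ_sub_goldenRatio_mul_fib]

lemma T_sub_fib_div (n : ℕ) :
    (T n : ℝ) - Nat.fib n / (φ + 2) = (tDefect (n % 4) - (1 - φ) ^ n) / 5 := by
  have hT : (tDefect n : ℝ) = 5 * T n - 3 * Nat.fib n + Nat.fib (n + 1) := by
    simp [tDefect]
  have hφ : φ + 2 ≠ 0 := by rw [phi_eq_goldenRatio]; linarith [Real.goldenRatio_pos]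
  rw [tDefect_periodic.map_mod_nat, hT, one_sub_phi_pow]
  field_simp
  linear_combination (-(Nat.fib n : ℝ)) * phi_sq

lemma one_sub_phi_pow_div (k : ℕ) :
    (1 - φ) ^ k / (Real.sqrt 5 * (φ + 2)) = -(1 - φ) ^ (k + 1) / 5 := by
  have hden : Real.sqrt 5 * (φ + 2) = 5 * φ := by
    rw [φ]; linear_combination (Real.sq_sqrt (show (0:ℝ) ≤ 5 by norm_num)) / 2
  rw [hden, phi_eq_goldenRatio, Real.one_sub_goldenConj, pow_succ, mul_comm (5 : ℝ), ← div_div,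
    div_eq_mul_inv _ Real.goldenRatio, Real.inv_goldenRatio]
  ring

theorem T_error_formulas (t : ℕ) (ht : 1 ≤ t) :
    (T (4 * t) : ℝ) - (Nat.fib (4 * t) : ℝ) / (φ + 2)
      = 1 / 5 + (1 - φ) ^ (4 * t - 1) / (Real.sqrt 5 * (φ + 2)) ∧
    (T (4 * t + 1) : ℝ) - (Nat.fib (4 * t + 1) : ℝ) / (φ + 2)
      = -2 / 5 + (2 - φ) * (1 - φ) ^ (4 * t - 2) / (Real.sqrt 5 * (φ + 2)) ∧
    (T (4 * t + 2) : ℝ) - (Nat.fib (4 * t + 2) : ℝ) / (φ + 2)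
      = -1 / 5 + (3 - 2 * φ) * (1 - φ) ^ (4 * t - 2) / (Real.sqrt 5 * (φ + 2)) ∧
    (T (4 * t + 3) : ℝ) - (Nat.fib (4 * t + 3) : ℝ) / (φ + 2)
      = 2 / 5 + (5 - 3 * φ) * (1 - φ) ^ (4 * t - 2) / (Real.sqrt 5 * (φ + 2)) := by
  obtain ⟨n, hn⟩ : ∃ n, 4 * t = n + 2 := ⟨4 * t - 2, by omega⟩
  have hψ2 : 2 - φ = (1 - φ) ^ 2 := by rw [one_sub_phi_pow]; norm_num [Nat.fib_add_two]
  have hψ3 : 3 - 2 * φ = (1 - φ) ^ 3 := by rw [one_sub_phi_pow]; norm_num [Nat.fib_add_two]; ring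
  have hψ4 : 5 - 3 * φ = (1 - φ) ^ 4 := by rw [one_sub_phi_pow]; norm_num [Nat.fib_add_two]; ring
  obtain ⟨d0, d1, d2, d3⟩ := tDefect_initial_values
  rw [show 4 * t - 1 = n + 1 by omega, show 4 * t - 2 = n by omega, hψ2, hψ3, hψ4]
  simp only [T_sub_fib_div, Nat.mul_add_mod, Nat.mul_mod_right, d0, d1, d2, d3]
  simp only [← pow_add, one_sub_phi_pow_div, hn]
  refine ⟨?_, ?_, ?_, ?_⟩ <;> push_cast <;> ring
end
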